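/- Every planar binary tree T has a unique maximal decomposition T = T_1 / T_2 / ... / T_k, where S/T denotes grafting the root of S onto the leftmost leaf of T; the factors are obtained by cutting each edge along the left border of T. -/
import Mathlib


/-- Planar binary trees, counted by internal nodes. -/
inductive PBT where
  | leaf : PBT
  | node : PBT → PBT → PBT
deriving DecidableEq

namespace PBT

/-- Number of internal nodes. -/
def size : PBT → ℕ
  | leaf => 0
  | node l r => size l + size r + 1

/-- One rotation step, going up in the Tamari order: a right comb
configuration `a·(b·c)` is replaced by a left comb configuration `(a·b)·c`,
possibly deep inside the tree. -/
inductive Rot : PBT → PBT → Prop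
  | rotate (a b c : PBT) : Rot (node a (node b c)) (node (node a b) c)
  | left {l l' : PBT} (r : PBT) : Rot l l' → Rot (node l r) (node l' r)
  | right (l : PBT) {r r' : PBT} : Rot r r' → Rot (node l r) (node l r')

/-- The Tamari order: the reflexive-transitive closure of rotation. -/
def le (S T : PBT) : Prop := Relation.ReflTransGen Rot S T

/-- The unique tree with one internal node. -/
def Y : PBT := node leaf leaf

/-- `S / T`: graft the root of `S` onto the leftmost leaf of `T`. -/
def graftL : PBT → PBT → PBT
  | S, leaf => S
  | S, node l r => node (graftL S l) r

/-- `T₁ / T₂ / ⋯ / T_k` for a list of trees (the empty graft is the trivial tree). -/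
def listGraft (L : List PBT) : PBT := L.foldr graftL leaf

/-- A (nontrivial) tree is indecomposable if it is not of the form `S / T`
with `S`, `T` both nontrivial. -/
def Indec (T : PBT) : Prop :=
  T ≠ leaf ∧ ¬ ∃ S U : PBT, S ≠ leaf ∧ U ≠ leaf ∧ graftL S U = T

end PBT


namespace PBT

/-- Factors along the left border. -/
def fact : PBT → List PBT
  | leaf => []
  | node l r => fact l ++ [node leaf r]

theorem graftL_eq_leaf {S U : PBT} (h : graftL S U = leaf) : S = leaf ∧ U = leaf := by
  cases U with
  | leaf => exact ⟨h, rfl⟩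
  | node l r => simp [graftL] at h

theorem foldr_node (L : List PBT) (x r : PBT) :
    List.foldr graftL (node x r) L = node (List.foldr graftL x L) r := by
  induction L with
  | nil => rfl
  | cons a L ih => simp [List.foldr, ih, graftL]

theorem listGraft_fact (T : PBT) : listGraft (fact T) = T := by
  induction T with
  | leaf => rfl
  | node l r ihl ihr =>
      simp only [fact, listGraft, List.foldr_append, List.foldr]
      show List.foldr graftL (graftL (node leaf r) leaf) (fact l) = node l r
      simp only [graftL, foldr_node]
      exact congrArg (fun x => node x r) ihl

theorem indec_node_leaf (r : PBT) : Indec (node leaf r) := by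
  refine ⟨by simp, ?_⟩
  rintro ⟨S, U, hS, hU, h⟩
  cases U with
  | leaf => exact hU rfl
  | node l' r' =>
      simp only [graftL, node.injEq] at h
      obtain ⟨h1, h2⟩ := h
      obtain ⟨hSl, _⟩ := graftL_eq_leaf h1
      exact hS hSl

theorem indec_eq (t : PBT) (h : Indec t) : ∃ r, t = node leaf r := by
  obtain ⟨hne, hdec⟩ := h
  cases t with
  | leaf => exact absurd rfl hne
  | node l r =>
      cases l with
      | leaf => exact ⟨r, rfl⟩
      | node a b =>
          exact absurd ⟨node a b, node leaf r, by simp, by simp, rfl⟩ hdec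

theorem listGraft_eq_leaf {L : List PBT} (hL : ∀ t ∈ L, Indec t)
    (h : listGraft L = leaf) : L = [] := by
  cases L with
  | nil => rfl
  | cons a L =>
      exfalso
      have := (graftL_eq_leaf h).1
      exact (hL a (by simp)).1 this

theorem fact_indec (T : PBT) : ∀ t ∈ fact T, Indec t := by
  induction T with
  | leaf => simp [fact]
  | node l r ihl ihr =>
      intro t ht
      simp only [fact, List.mem_append, List.mem_singleton] at ht
      rcases ht with h | h
      · exact ihl t h
      · exact h ▸ indec_node_leaf r

theorem fact_unique (T : PBT) : ∀ L : List PBT, (∀ t ∈ L, Indec t) →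
    listGraft L = T → L = fact T := by
  induction T with
  | leaf => intro L hL h; simp [listGraft_eq_leaf hL h, fact]
  | node l r ihl ihr =>
      intro L hL h
      rcases List.eq_nil_or_concat L with rfl | ⟨A, b, rfl⟩
      · exact absurd h (by simp [listGraft])
      · obtain ⟨r', rfl⟩ := indec_eq b (hL b (by simp))
        have hA : ∀ t ∈ A, Indec t := fun t ht => hL t (by simp [ht])
        have : listGraft (A ++ [node leaf r']) =
            node (listGraft A) r' := by
          simp only [listGraft, List.foldr_append, List.foldr]
          show List.foldr graftL (graftL (node leaf r') leaf) A = _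
          simp only [graftL, foldr_node]
        rw [List.concat_eq_append] at h ⊢
        rw [this] at h
        injection h with h1 h2
        subst h2
        rw [fact, ihl A hA h1]

end PBT

/-- Every nontrivial planar binary tree has a unique maximal decomposition
`T = T₁ / T₂ / ⋯ / T_k`, i.e. a unique decomposition into indecomposable factors. -/
theorem unique_maximal_decomposition (T : PBT) (hT : T ≠ PBT.leaf) :
    ∃! L : List PBT, (∀ t ∈ L, PBT.Indec t) ∧ PBT.listGraft L = T := by
  refine ⟨PBT.fact T, ⟨PBT.fact_indec T, PBT.listGraft_fact T⟩, ?_⟩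
  rintro L ⟨hL, hLT⟩
  exact PBT.fact_unique T L hL hLT
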